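/- arXiv:1908.11035 — 2 statements merged into one kernel-verified Lean document; each statement's English description precedes it below -/
import Mathlib

section
/- Gagliardo–Nirenberg inequality on ℝ: there exists a constant C such that for every Schwartz function u on ℝ, ‖u‖_{L^∞(ℝ)} ≤ C ‖u‖_{L²(ℝ)}^{1/2} ‖u'‖_{L²(ℝ)}^{1/2}. -/
/-!
Since `u` vanishes at `-∞`, the fundamental theorem of calculus gives
`u x ^ 2 = ∫_{-∞}^x 2 u u' ≤ 2 ∫ |u u'|`, and Cauchy–Schwarz bounds the last integral by
`‖u‖₂ ‖u'‖₂`. Taking square roots yields the inequality with `C = √2`.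
-/

open MeasureTheory Filter Set Real Topology

theorem integral_abs_mul_le_sqrt_integral_sq_mul_sqrt_integral_sq {α : Type*}
    [MeasurableSpace α] {μ : Measure α} {f g : α → ℝ} (hf : MemLp f 2 μ) (hg : MemLp g 2 μ) :
    ∫ a, |f a * g a| ∂μ ≤ √(∫ a, f a ^ 2 ∂μ) * √(∫ a, g a ^ 2 ∂μ) := by
  have h := integral_mul_norm_le_Lp_mul_Lq (f := f) (g := g) Real.HolderConjugate.two_two
    (by rwa [ENNReal.ofReal_ofNat]) (by rwa [ENNReal.ofReal_ofNat])
  simpa only [norm_eq_abs, ← abs_mul, rpow_two, sq_abs, ← sqrt_eq_rpow] using h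

theorem sq_le_two_mul_integral_abs_mul_deriv {f : ℝ → ℝ} (hf : Differentiable ℝ f)
    (hf_atBot : Tendsto f atBot (𝓝 0)) (hint : Integrable (fun y ↦ f y * deriv f y)) (x : ℝ) :
    f x ^ 2 ≤ 2 * ∫ y, |f y * deriv f y| := by
  have hftc : ∫ y in Iic x, 2 * (f y * deriv f y) = f x ^ 2 := by
    have hsq : Tendsto (fun y ↦ f y ^ 2) atBot (𝓝 0) := by simpa using hf_atBot.pow 2
    simpa using integral_Iic_of_hasDerivAt_of_tendsto'
      (fun y _ ↦ by simpa [mul_assoc] using (hf y).hasDerivAt.fun_pow 2)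
      (hint.const_mul 2).integrableOn hsq
  calc f x ^ 2 = 2 * ∫ y in Iic x, f y * deriv f y := by rw [← hftc, integral_const_mul]
    _ ≤ 2 * ∫ y in Iic x, |f y * deriv f y| :=
      mul_le_mul_of_nonneg_left
        (integral_mono hint.integrableOn hint.abs.integrableOn fun y ↦ le_abs_self _) zero_le_two
    _ ≤ 2 * ∫ y, |f y * deriv f y| :=
      mul_le_mul_of_nonneg_left
        (setIntegral_le_integral hint.abs (.of_forall fun y ↦ abs_nonneg _)) zero_le_two

namespace SchwartzMap

theorem tendsto_atBot (u : 𝓢(ℝ, ℝ)) : Tendsto u atBot (𝓝 0) :=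
  u.tendsto_cocompact.mono_left (by rw [cocompact_eq_atBot_atTop]; exact le_sup_left)

theorem sq_le_two_mul_sqrt_integral_sq_mul_sqrt_integral_deriv_sq (u : 𝓢(ℝ, ℝ)) (x : ℝ) :
    u x ^ 2 ≤ 2 * (√(∫ y, u y ^ 2) * √(∫ y, deriv u y ^ 2)) := by
  have hu : MemLp u 2 := u.memLp 2
  have hu' : MemLp (deriv u) 2 := by
    simpa [funext (derivCLM_apply ℝ u)] using (derivCLM ℝ ℝ u).memLp 2
  calc u x ^ 2 ≤ 2 * ∫ y, |u y * deriv u y| :=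
        sq_le_two_mul_integral_abs_mul_deriv u.differentiable u.tendsto_atBot
          (hu.integrable_mul hu') x
    _ ≤ _ := mul_le_mul_of_nonneg_left
        (integral_abs_mul_le_sqrt_integral_sq_mul_sqrt_integral_sq hu hu') zero_le_two

end SchwartzMap

/-- Gagliardo–Nirenberg inequality on `ℝ`:
`‖u‖_{L^∞} ≤ C ‖u‖_{L²}^{1/2} ‖u'‖_{L²}^{1/2}` for Schwartz functions. -/
theorem stmt3 : ∃ C > 0, ∀ u : SchwartzMap ℝ ℝ, ∀ x : ℝ,
    |u x| ≤ C * (∫ y : ℝ, (u y) ^ 2) ^ ((1 : ℝ)/4) *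
      (∫ y : ℝ, (deriv (fun z => u z) y) ^ 2) ^ ((1 : ℝ)/4) := by
  refine ⟨√2, by positivity, fun u x ↦ ?_⟩
  have sqrt_sqrt {I : ℝ} (hI : 0 ≤ I) : √(√I) = I ^ ((1 : ℝ) / 4) := by
    rw [sqrt_eq_rpow, sqrt_eq_rpow, ← rpow_mul hI]; norm_num
  have hI₁ : 0 ≤ ∫ y, u y ^ 2 := integral_nonneg fun y ↦ sq_nonneg _
  have hI₂ : 0 ≤ ∫ y, deriv u y ^ 2 := integral_nonneg fun y ↦ sq_nonneg _
  calc |u x| = √(u x ^ 2) := (sqrt_sq_eq_abs _).symm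
    _ ≤ √(2 * (√(∫ y, u y ^ 2) * √(∫ y, deriv u y ^ 2))) :=
      sqrt_le_sqrt (u.sq_le_two_mul_sqrt_integral_sq_mul_sqrt_integral_deriv_sq x)
    _ = _ := by
      rw [sqrt_mul zero_le_two, sqrt_mul (sqrt_nonneg _), sqrt_sqrt hI₁, sqrt_sqrt hI₂, mul_assoc]
end

section
/- Logarithmic Sobolev embedding on the torus: there exists a constant C such that for every f ∈ L²(𝕋) with Fourier coefficients f̂(α) satisfying Σ_{α≠0} |α| (log(|α|+e))² |f̂(α)|² < ∞, one has ‖f − (2π)^{-1} ∫_𝕋 f dx‖_{L^∞(𝕋)} ≤ C (Σ_{α≠0} |α| (log(|α|+e))² |f̂(α)|²)^{1/2}. -/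
/-!
Write `σ(α) = |α| log²(|α| + e)`. By Cauchy condensation `∑_{α ≠ 0} σ(α)⁻¹ < ∞`, so
Cauchy–Schwarz gives `∑_{α ≠ 0} |f̂(α)| ≤ (∑ σ⁻¹)^{1/2} (∑ σ |f̂|²)^{1/2}`. Absolutely summable
coefficients make the Fourier series converge uniformly to a continuous `g`; since the series
also converges to `f` in `L²`, `f = g` almost everywhere, and `|g - f̂(0)|` is bounded pointwise
by `∑_{α ≠ 0} |f̂(α)|`.
-/

open MeasureTheory Real AddCircle

instance : Fact (0 < 2 * Real.pi) := ⟨by positivity⟩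

lemma one_le_log_add_exp_one {x : ℝ} (hx : 0 ≤ x) : 1 ≤ log (x + exp 1) := by
  simpa using log_le_log (exp_pos 1) (le_add_of_nonneg_left hx)

lemma summable_nat_inv_mul_log_add_exp_one_sq :
    Summable fun n : ℕ => ((n : ℝ) * log (n + exp 1) ^ 2)⁻¹ := by
  refine (summable_condensed_iff_of_nonneg (fun n => by positivity) fun m n hm hmn => ?_).1 ?_
  · have := one_le_log_add_exp_one m.cast_nonneg
    gcongr
  · rw [← summable_nat_add_iff 1]
    have hlog2 := log_pos one_lt_two
    have hinvsq : Summable fun k : ℕ => (((k + 1 : ℕ) : ℝ) ^ 2)⁻¹ :=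
      (summable_nat_add_iff 1).2 (summable_nat_pow_inv.2 one_lt_two)
    refine .of_nonneg_of_le (fun k => by positivity) (fun k => ?_) (hinvsq.mul_right (log 2 ^ 2)⁻¹)
    push_cast
    rw [← mul_inv, ← mul_pow, mul_inv (2 ^ (k + 1) : ℝ), mul_inv_cancel_left₀ (by positivity)]
    gcongr
    calc (k + 1) * log 2 = log (2 ^ (k + 1)) := by rw [log_pow]; push_cast; ring
      _ ≤ log (2 ^ (k + 1) + exp 1) := log_le_log (by positivity) (by linarith [exp_pos 1])

theorem summable_and_tsum_sqrt_mul_sqrt_le {ι : Type*} {a b : ι → ℝ} (ha : ∀ i, 0 ≤ a i)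
    (hb : ∀ i, 0 ≤ b i) (ha' : Summable a) (hb' : Summable b) :
    (Summable fun i => √(a i) * √(b i)) ∧
      ∑' i, √(a i) * √(b i) ≤ √(∑' i, a i) * √(∑' i, b i) := by
  have hsq : ∀ {x : ℝ}, 0 ≤ x → √x ^ (2 : ℝ) = x := fun hx => by rw [rpow_two, sq_sqrt hx]
  have := summable_and_inner_le_Lp_mul_Lq_tsum_of_nonneg Real.HolderConjugate.two_two
    (fun i => sqrt_nonneg (a i)) (fun i => sqrt_nonneg (b i))
    (f := fun i => √(a i)) (g := fun i => √(b i))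
  simp only [hsq (ha _), hsq (hb _), ← sqrt_eq_rpow] at this
  exact this ha' hb'

section Fourier

variable {T : ℝ} [Fact (0 < T)] {f : AddCircle T → ℂ}

theorem ae_eq_of_hasSum_fourier {g : C(AddCircle T, ℂ)} (hf : MemLp f 2 haarAddCircle)
    (hg : HasSum (fun n => fourierCoeff f n • fourier n) g) : f =ᵐ[haarAddCircle] g := by
  have hf_L2 : HasSum (fun n => fourierCoeff f n • fourierLp 2 n) (hf.toLp f) := by
    simpa [fourierCoeff_congr_ae hf.coeFn_toLp] using hasSum_fourier_series_L2 (hf.toLp f)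
  have hg_L2 : HasSum (fun n => fourierCoeff f n • fourierLp 2 n)
      (ContinuousMap.toLp 2 haarAddCircle ℂ g) := by
    simpa using (ContinuousMap.toLp (E := ℂ) 2 haarAddCircle ℂ).hasSum hg
  have hLp := hf_L2.unique hg_L2
  exact hf.coeFn_toLp.symm.trans (hLp ▸ ContinuousMap.coeFn_toLp haarAddCircle g)

theorem eLpNorm_top_sub_fourierCoeff_zero_le (hf : MemLp f 2 haarAddCircle) {s : ℝ}
    (hs : HasSum (Function.update (fun n => ‖fourierCoeff f n‖) 0 0) s) :
    eLpNorm (fun x => f x - fourierCoeff f 0) ⊤ haarAddCircle ≤ ENNReal.ofReal s := by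
  have hsum : Summable fun n => fourierCoeff f n • fourier (T := T) n := by
    refine .of_norm ?_
    simpa [norm_smul, fourier_norm] using (hs.update 0 ‖fourierCoeff f 0‖).summable
  obtain ⟨g, hg⟩ := hsum
  have hg_bound : ∀ x, ‖g x - fourierCoeff f 0‖ ≤ s := fun x => by
    have hx := hasSum_ite_sub_hasSum ((ContinuousMap.evalCLM ℂ x).hasSum hg) 0
    simp only [ContinuousMap.evalCLM_apply, ContinuousMap.smul_apply, fourier_zero, smul_eq_mul,
      mul_one] at hx
    refine hx.norm_le_of_bounded hs fun n => ?_
    rcases eq_or_ne n 0 with rfl | hn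
    · simp
    · simp [hn, Circle.norm_coe]
  rw [eLpNorm_exponent_top]
  refine eLpNormEssSup_le_of_ae_bound ?_
  filter_upwards [ae_eq_of_hasSum_fourier hf hg] with x hx
  rw [hx]
  exact hg_bound x

end Fourier

noncomputable def logSobolevWeight (α : ℤ) : ℝ := |(α : ℝ)| * log (|(α : ℝ)| + exp 1) ^ 2

lemma logSobolevWeight_nonneg (α : ℤ) : 0 ≤ logSobolevWeight α := by
  unfold logSobolevWeight; positivity

lemma logSobolevWeight_pos {α : ℤ} (hα : α ≠ 0) : 0 < logSobolevWeight α := by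
  have := one_le_log_add_exp_one (abs_nonneg (α : ℝ))
  unfold logSobolevWeight; positivity

lemma summable_inv_logSobolevWeight : Summable fun α => (logSobolevWeight α)⁻¹ := by
  have hnat : ∀ n : ℕ, (logSobolevWeight n)⁻¹ = ((n : ℝ) * log (n + exp 1) ^ 2)⁻¹ := by
    simp [logSobolevWeight]
  refine .of_nat_of_neg ?_ ?_ <;>
    simpa [hnat, logSobolevWeight] using summable_nat_inv_mul_log_add_exp_one_sq

lemma tsum_inv_logSobolevWeight_pos : 0 < ∑' α, (logSobolevWeight α)⁻¹ :=
  summable_inv_logSobolevWeight.tsum_pos (fun α => inv_nonneg.2 (logSobolevWeight_nonneg α)) 1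
    (inv_pos.2 (logSobolevWeight_pos one_ne_zero))

/-- Logarithmic Sobolev embedding on the torus `𝕋 = ℝ/2πℤ`:
`‖f − f̂(0)‖_{L^∞} ≤ C (∑_{α≠0} |α| (log(|α|+e))² |f̂(α)|²)^{1/2}`.
(The `α = 0` term of the sum vanishes since it carries the factor `|α|`, and
`f̂(0) = (2π)⁻¹ ∫_𝕋 f` for the normalized Haar measure.) -/
theorem stmt4 : ∃ C > 0, ∀ f : AddCircle (2 * Real.pi) → ℂ,
    MemLp f 2 haarAddCircle →
    Summable (fun α : ℤ =>
      |(α : ℝ)| * Real.log (|(α : ℝ)| + Real.exp 1) ^ 2 * ‖fourierCoeff f α‖ ^ 2) →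
    eLpNorm (fun x => f x - fourierCoeff f 0) ⊤ haarAddCircle ≤
      ENNReal.ofReal (C * Real.sqrt (∑' α : ℤ,
        |(α : ℝ)| * Real.log (|(α : ℝ)| + Real.exp 1) ^ 2 * ‖fourierCoeff f α‖ ^ 2)) := by
  refine ⟨√(∑' α, (logSobolevWeight α)⁻¹), sqrt_pos.2 tsum_inv_logSobolevWeight_pos,
    fun f hf hS => ?_⟩
  -- `(logSobolevWeight 0)⁻¹ = 0`, so Cauchy–Schwarz sees exactly the coefficients with `α ≠ 0`.
  have hcoeff : (fun α => √(logSobolevWeight α)⁻¹ * √(logSobolevWeight α * ‖fourierCoeff f α‖ ^ 2))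
      = Function.update (fun α => ‖fourierCoeff f α‖) 0 0 := by
    funext α
    rcases eq_or_ne α 0 with rfl | hα
    · simp [logSobolevWeight]
    · rw [Function.update_of_ne hα, ← sqrt_mul (inv_nonneg.2 (logSobolevWeight_nonneg α)),
        inv_mul_cancel_left₀ (logSobolevWeight_pos hα).ne', sqrt_sq (norm_nonneg _)]
  obtain ⟨hsum, hle⟩ := summable_and_tsum_sqrt_mul_sqrt_le
    (fun α => inv_nonneg.2 (logSobolevWeight_nonneg α))
    (fun α => mul_nonneg (logSobolevWeight_nonneg α) (sq_nonneg _))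
    summable_inv_logSobolevWeight hS
  rw [hcoeff] at hsum hle
  exact (eLpNorm_top_sub_fourierCoeff_zero_le hf hsum.hasSum).trans (ENNReal.ofReal_le_ofReal hle)
end
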